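/- For all i, j, m ∈ ℕ: if |i − j| ≤ m ≤ i + j and i + j − m is even, then 𝔠̄_{ijm} = (i+j−m+2)·(i−j+m+2)·(−i+j+m+2)·(i+j+m+6) / (4·√(2π·(i+1)(i+3)(j+1)(j+3)(m+1)(m+3))) (with i − j and −i + j interpreted as integers); otherwise 𝔠̄_{ijm} = 0. -/

import Mathlib

open MeasureTheory

/-- Gegenbauer (ultraspherical) polynomial `C_n^{(2)}` of degree `n` with parameter `2`,
as a real-valued function. -/
noncomputable def geg (n : ℕ) (y : ℝ) : ℝ :=
  ∑ k ∈ Finset.range (n / 2 + 1),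
    (-1:ℝ) ^ k *
      ((Nat.factorial (n - k + 1) : ℝ) /
        ((Nat.factorial k : ℝ) * (Nat.factorial (n - 2 * k) : ℝ))) *
      (2 * y) ^ (n - 2 * k)

/-- The normalization constant `𝔴_n = √(8/π)/√((n+1)(n+3))`. -/
noncomputable def wYM (n : ℕ) : ℝ :=
  Real.sqrt (8 / Real.pi) / Real.sqrt (((n:ℝ) + 1) * ((n:ℝ) + 3))

/-- The quadratic Fourier coefficients `𝔠̄_{ijm}` of the spherically symmetric equivariant
Yang–Mills equation on the Einstein cylinder. -/
noncomputable def cbar (i j m : ℕ) : ℝ :=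
  wYM i * wYM j * wYM m *
    ∫ y in (-1:ℝ)..1, geg i y * geg j y * geg m y * (1 - y ^ 2) ^ ((3:ℝ) / 2)

/-- The cubic Fourier coefficients `𝔠_{ijkm}` of the spherically symmetric equivariant
Yang–Mills equation on the Einstein cylinder. -/
noncomputable def cquad (i j k m : ℕ) : ℝ :=
  wYM i * wYM j * wYM k * wYM m *
    ∫ y in (-1:ℝ)..1, geg i y * geg j y * geg k y * geg m y * (1 - y ^ 2) ^ ((5:ℝ) / 2)

/-!
With `y = cos θ` the weight becomes `sin³ θ` and the Gegenbauer polynomials become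
trigonometric: `4 C_n(cos θ) sin³ θ = (n+3) sin((n+1)θ) - (n+1) sin((n+3)θ)`, so by
orthogonality of the sines `∫ C_m (1-y²)^{3/2} = 3π/8 · δ_{m0}`. The three-term recurrence
`(n+2) C_{n+2} + (n+4) C_n = 2(n+3) y C_{n+1}` moves the factor `y` from one factor of the
triple integral to another, which yields a recurrence in two of the three indices; together
with the values above and the symmetry of the integral it determines all triple integrals.
The closed formula satisfies the same recurrence: inside the admissible triangle this is a
polynomial identity, and the formula extends by zero because the polynomial vanishes just
outside it.
-/

open Real intervalIntegral Finset

noncomputable def gegTerm (n k : ℕ) (y : ℝ) : ℝ :=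
  (-1:ℝ) ^ k *
    ((Nat.factorial (n - k + 1) : ℝ) /
      ((Nat.factorial k : ℝ) * (Nat.factorial (n - 2 * k) : ℝ))) *
    (2 * y) ^ (n - 2 * k)

lemma geg_eq_sum_gegTerm (n : ℕ) (y : ℝ) :
    geg n y = ∑ k ∈ range (n / 2 + 1), gegTerm n k y := rfl

lemma gegTerm_zero (n : ℕ) (y : ℝ) : gegTerm n 0 y = (n + 1) * (2 * y) ^ n := by
  have : (Nat.factorial n : ℝ) ≠ 0 := by positivity
  simp only [gegTerm, pow_zero, one_mul, Nat.sub_zero, Nat.mul_zero, Nat.factorial_zero,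
    Nat.cast_one, Nat.factorial_succ, Nat.cast_mul]
  field_simp
  push_cast
  ring

lemma gegTerm_succ_rec {n k : ℕ} (h : 2 * k + 1 ≤ n) (y : ℝ) :
    ((n:ℝ) + 2) * gegTerm (n + 2) (k + 1) y + ((n:ℝ) + 4) * gegTerm n k y =
      2 * ((n:ℝ) + 3) * y * gegTerm (n + 1) (k + 1) y := by
  obtain ⟨r, rfl⟩ := Nat.exists_eq_add_of_le h
  have e₁ : 2 * k + 1 + r + 2 - (k + 1) + 1 = (k + r + 2) + 1 := by omega
  have e₂ : 2 * k + 1 + r + 2 - 2 * (k + 1) = r + 1 := by omega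
  have e₃ : 2 * k + 1 + r - k + 1 = k + r + 2 := by omega
  have e₄ : 2 * k + 1 + r - 2 * k = r + 1 := by omega
  have e₅ : 2 * k + 1 + r + 1 - (k + 1) + 1 = k + r + 2 := by omega
  have e₆ : 2 * k + 1 + r + 1 - 2 * (k + 1) = r := by omega
  have : (Nat.factorial k : ℝ) ≠ 0 := by positivity
  have : (Nat.factorial r : ℝ) ≠ 0 := by positivity
  simp only [gegTerm, e₁, e₂, e₃, e₄, e₅, e₆, Nat.factorial_succ, pow_succ,
    Nat.cast_mul]
  field_simp
  push_cast
  ring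

lemma gegTerm_last (N : ℕ) (y : ℝ) :
    ((2 * N : ℕ) + 2 : ℝ) * gegTerm (2 * N + 2) (N + 1) y +
      ((2 * N : ℕ) + 4 : ℝ) * gegTerm (2 * N) N y = 0 := by
  have e₁ : 2 * N + 2 - (N + 1) + 1 = N + 1 + 1 := by omega
  have e₂ : 2 * N + 2 - 2 * (N + 1) = 0 := by omega
  have e₃ : 2 * N - N + 1 = N + 1 := by omega
  have e₄ : 2 * N - 2 * N = 0 := by omega
  have : (Nat.factorial N : ℝ) ≠ 0 := by positivity
  simp only [gegTerm, e₁, e₂, e₃, e₄, Nat.factorial_succ, pow_succ, pow_zero,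
    Nat.factorial_zero, Nat.cast_mul]
  field_simp
  push_cast
  ring

lemma geg_zero (y : ℝ) : geg 0 y = 1 := by simp [geg]

lemma geg_one (y : ℝ) : geg 1 y = 4 * y := by norm_num [geg, ← mul_assoc]

theorem geg_rec (n : ℕ) (y : ℝ) :
    ((n:ℝ) + 2) * geg (n + 2) y + ((n:ℝ) + 4) * geg n y =
      2 * ((n:ℝ) + 3) * y * geg (n + 1) y := by
  have hlead : ((n:ℝ) + 2) * gegTerm (n + 2) 0 y =
      2 * ((n:ℝ) + 3) * y * gegTerm (n + 1) 0 y := by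
    rw [gegTerm_zero, gegTerm_zero]
    push_cast
    ring
  have hbody : ∀ k ∈ range ((n + 1) / 2),
      ((n:ℝ) + 2) * gegTerm (n + 2) (k + 1) y + ((n:ℝ) + 4) * gegTerm n k y =
        2 * ((n:ℝ) + 3) * y * gegTerm (n + 1) (k + 1) y := fun k hk =>
    gegTerm_succ_rec (by rw [mem_range] at hk; omega) y
  -- for even `n` the sum on the left has one term more, and that term vanishes
  have htail : ∑ k ∈ range (n / 2 + 1),
      (((n:ℝ) + 2) * gegTerm (n + 2) (k + 1) y + ((n:ℝ) + 4) * gegTerm n k y) =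
        ∑ k ∈ range ((n + 1) / 2), 2 * ((n:ℝ) + 3) * y * gegTerm (n + 1) (k + 1) y := by
    rcases Nat.even_or_odd' n with ⟨N, rfl | rfl⟩
    · rw [show 2 * N / 2 + 1 = (2 * N + 1) / 2 + 1 by omega, sum_range_succ,
        sum_congr rfl hbody, show (2 * N + 1) / 2 = N by omega, gegTerm_last, add_zero]
    · rw [show (2 * N + 1) / 2 + 1 = (2 * N + 1 + 1) / 2 by omega, sum_congr rfl hbody]
  calc ((n:ℝ) + 2) * geg (n + 2) y + ((n:ℝ) + 4) * geg n y
      = ∑ k ∈ range (n / 2 + 1),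
          (((n:ℝ) + 2) * gegTerm (n + 2) (k + 1) y + ((n:ℝ) + 4) * gegTerm n k y) +
          ((n:ℝ) + 2) * gegTerm (n + 2) 0 y := by
        rw [geg_eq_sum_gegTerm, geg_eq_sum_gegTerm,
          show (n + 2) / 2 + 1 = n / 2 + 1 + 1 by omega, sum_range_succ', mul_add, mul_sum,
          mul_sum, sum_add_distrib]
        ring
    _ = 2 * ((n:ℝ) + 3) * y * geg (n + 1) y := by
        rw [htail, hlead, geg_eq_sum_gegTerm, sum_range_succ' _ ((n + 1) / 2),
          mul_add (2 * ((n:ℝ) + 3) * y), mul_sum]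

/-- `gegShift (n + 1) = C_n^{(2)}` and `gegShift 0 = 0`: with this padding the three-term
recurrence also holds at the bottom, and the index `n + 1` is the frequency in the
trigonometric form. -/
noncomputable def gegShift : ℕ → ℝ → ℝ
  | 0 => fun _ => 0
  | n + 1 => geg n

lemma gegShift_rec (k : ℕ) (y : ℝ) :
    ((k:ℝ) + 1) * gegShift (k + 2) y + ((k:ℝ) + 3) * gegShift k y =
      2 * ((k:ℝ) + 2) * y * gegShift (k + 1) y := by
  cases k with
  | zero =>
    simp only [gegShift, geg_zero, geg_one]
    push_cast
    ring
  | succ n =>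
    simp only [gegShift]
    push_cast
    linear_combination geg_rec n y

lemma gegShift_cos_mul_sin_pow_three (n : ℕ) (θ : ℝ) :
    4 * gegShift n (cos θ) * sin θ ^ 3 =
      ((n:ℝ) + 2) * sin (n * θ) - n * sin ((n + 2) * θ) := by
  induction n using Nat.twoStepInduction with
  | zero => simp [gegShift]
  | one =>
    simp only [gegShift, geg_zero, Nat.cast_one, one_mul]
    rw [show (1:ℝ) + 2 = 3 by norm_num]
    linear_combination Real.sin_three_mul θ
  | more n ih₀ ih₁ =>
    have hrec := gegShift_rec n (cos θ)
    have hprod₁ := two_mul_sin_mul_cos ((n + 1) * θ) θ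
    have hprod₂ := two_mul_sin_mul_cos ((n + 3) * θ) θ
    push_cast at ih₁ ⊢
    rw [show (n + 1) * θ - θ = n * θ by ring, show (n + 1) * θ + θ = (n + 2) * θ by ring]
      at hprod₁
    rw [show (n + 3) * θ - θ = (n + 2) * θ by ring,
      show (n + 3) * θ + θ = (n + 4) * θ by ring] at hprod₂
    rw [show (n:ℝ) + 1 + 2 = n + 3 by ring] at ih₁
    rw [show (n:ℝ) + 2 + 2 = n + 4 by ring]
    apply mul_left_cancel₀ (by positivity : (n:ℝ) + 1 ≠ 0)
    linear_combination 4 * sin θ ^ 3 * hrec - (n + 3) * ih₀ + 2 * (n + 2) * cos θ * ih₁ +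
      ((n:ℝ) + 2) * (n + 3) * hprod₁ - (n + 2) * (n + 1) * hprod₂

lemma continuous_geg (n : ℕ) : Continuous (geg n) := by
  unfold geg
  fun_prop

lemma continuous_gegShift : ∀ n, Continuous (gegShift n)
  | 0 => continuous_const
  | n + 1 => continuous_geg n

lemma integral_cos_int_mul (k : ℤ) :
    ∫ θ in (0:ℝ)..π, cos (k * θ) = if k = 0 then π else 0 := by
  split_ifs with hk
  · simp [hk]
  · have hk' : (k:ℝ) ≠ 0 := by exact_mod_cast hk
    rw [integral_comp_mul_left (fun θ => cos θ) hk', integral_cos, sin_int_mul_pi]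
    simp

lemma integral_sin_nat_mul_mul_sin (p : ℕ) :
    ∫ θ in (0:ℝ)..π, sin (p * θ) * sin θ = if p = 1 then π / 2 else 0 := by
  have hprod : ∀ θ, sin (p * θ) * sin θ =
      (cos (((p:ℤ) - 1 : ℤ) * θ) - cos (((p:ℤ) + 1 : ℤ) * θ)) / 2 := fun θ => by
    push_cast
    rw [show ((p:ℝ) - 1) * θ = p * θ - θ by ring,
      show ((p:ℝ) + 1) * θ = p * θ + θ by ring]
    linear_combination (1 / 2 : ℝ) * two_mul_sin_mul_sin (p * θ) θ
  simp_rw [hprod]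
  rw [intervalIntegral.integral_div, intervalIntegral.integral_sub
    ((by fun_prop : Continuous _).intervalIntegrable _ _)
    ((by fun_prop : Continuous _).intervalIntegrable _ _),
    integral_cos_int_mul, integral_cos_int_mul]
  split_ifs <;> first | (exfalso; omega) | ring

lemma integral_neg_one_one_eq_integral_cos {g : ℝ → ℝ} (hg : Continuous g) :
    ∫ y in (-1:ℝ)..1, g y = ∫ θ in (0:ℝ)..π, g (cos θ) * sin θ := by
  have hsubst := integral_comp_mul_deriv (a := 0) (b := π) (f' := fun θ => -sin θ)
    (fun θ _ => hasDerivAt_cos θ) (by fun_prop) hg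
  rw [cos_zero, cos_pi, integral_symm (-1) 1] at hsubst
  simp only [Function.comp, mul_neg, intervalIntegral.integral_neg, neg_inj] at hsubst
  exact hsubst.symm

lemma one_sub_cos_sq_rpow_three_halves {θ : ℝ} (h₀ : 0 ≤ θ) (hπ : θ ≤ π) :
    (1 - cos θ ^ 2) ^ ((3:ℝ) / 2) = sin θ ^ 3 := by
  rw [← sin_sq, ← rpow_natCast (sin θ) 2,
    ← rpow_mul (sin_nonneg_of_nonneg_of_le_pi h₀ hπ)]
  norm_num

lemma continuous_one_sub_sq_rpow_three_halves :
    Continuous (fun y : ℝ => (1 - y ^ 2) ^ ((3:ℝ) / 2)) :=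
  Continuous.rpow_const (by fun_prop) fun _ => Or.inr (by norm_num)

lemma integral_mul_one_sub_sq_rpow_three_halves {f : ℝ → ℝ} (hf : Continuous f) :
    ∫ y in (-1:ℝ)..1, f y * (1 - y ^ 2) ^ ((3:ℝ) / 2) =
      ∫ θ in (0:ℝ)..π, f (cos θ) * sin θ ^ 3 * sin θ := by
  rw [integral_neg_one_one_eq_integral_cos (g := fun y => f y * (1 - y ^ 2) ^ ((3:ℝ) / 2))
    (hf.mul continuous_one_sub_sq_rpow_three_halves)]
  refine integral_congr fun θ hθ => ?_
  rw [Set.uIcc_of_le pi_pos.le] at hθ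
  simp only [one_sub_cos_sq_rpow_three_halves hθ.1 hθ.2]

lemma integral_gegShift_mul_weight (c : ℕ) :
    ∫ y in (-1:ℝ)..1, gegShift c y * (1 - y ^ 2) ^ ((3:ℝ) / 2) =
      if c = 1 then 3 * π / 8 else 0 := by
  have htrig : ∀ θ, gegShift c (cos θ) * sin θ ^ 3 * sin θ =
      ((c:ℝ) + 2) / 4 * (sin (c * θ) * sin θ) -
        (c:ℝ) / 4 * (sin ((c + 2 : ℕ) * θ) * sin θ) := fun θ => by
    push_cast
    linear_combination sin θ / 4 * gegShift_cos_mul_sin_pow_three c θ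
  simp_rw [integral_mul_one_sub_sq_rpow_three_halves (continuous_gegShift c), htrig]
  rw [intervalIntegral.integral_sub ((by fun_prop : Continuous _).intervalIntegrable _ _)
      ((by fun_prop : Continuous _).intervalIntegrable _ _),
    intervalIntegral.integral_const_mul, intervalIntegral.integral_const_mul,
    integral_sin_nat_mul_mul_sin, integral_sin_nat_mul_mul_sin,
    if_neg (show c + 2 ≠ 1 by omega)]
  split_ifs with hc
  · subst hc
    norm_num
    ring
  · ring

lemma intervalIntegral.integral_const_mul_add_const_mul {f g : ℝ → ℝ} {a b : ℝ}
    (hf : IntervalIntegrable f volume a b) (hg : IntervalIntegrable g volume a b) (p q : ℝ) :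
    ∫ x in a..b, (p * f x + q * g x) = p * (∫ x in a..b, f x) + q * ∫ x in a..b, g x := by
  rw [intervalIntegral.integral_add (hf.const_mul p) (hg.const_mul q),
    intervalIntegral.integral_const_mul, intervalIntegral.integral_const_mul]

noncomputable def gegTriple (a b c : ℕ) : ℝ :=
  ∫ y in (-1:ℝ)..1, gegShift a y * gegShift b y * gegShift c y * (1 - y ^ 2) ^ ((3:ℝ) / 2)

lemma intervalIntegrable_gegTriple (a b c : ℕ) :
    IntervalIntegrable
      (fun y => gegShift a y * gegShift b y * gegShift c y * (1 - y ^ 2) ^ ((3:ℝ) / 2))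
      volume (-1) 1 :=
  (((continuous_gegShift a).mul (continuous_gegShift b)).mul (continuous_gegShift c)).mul
    continuous_one_sub_sq_rpow_three_halves |>.intervalIntegrable _ _

lemma cbar_eq_gegTriple (i j m : ℕ) :
    cbar i j m = wYM i * wYM j * wYM m * gegTriple (i + 1) (j + 1) (m + 1) := rfl

lemma gegTriple_comm (a b c : ℕ) : gegTriple a b c = gegTriple b a c := by
  simp only [gegTriple, mul_comm (gegShift a _)]

lemma gegTriple_zero_left (b c : ℕ) : gegTriple 0 b c = 0 := by
  simp [gegTriple, gegShift]

lemma gegTriple_zero_right (a b : ℕ) : gegTriple a b 0 = 0 := by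
  simp [gegTriple, gegShift]

lemma gegTriple_one_one (c : ℕ) : gegTriple 1 1 c = if c = 1 then 3 * π / 8 else 0 := by
  rw [← integral_gegShift_mul_weight]
  simp [gegTriple, gegShift, geg_zero]

def SatisfiesGegTripleRec (X : ℕ → ℕ → ℝ) : Prop :=
  ∀ a c : ℕ, ((c:ℝ) + 2) * (((a:ℝ) + 1) * X (a + 2) (c + 1) + ((a:ℝ) + 3) * X a (c + 1)) =
    ((a:ℝ) + 2) * (((c:ℝ) + 1) * X (a + 1) (c + 2) + ((c:ℝ) + 3) * X (a + 1) c)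

/-- Both sides are the integral of `2 (a+2) (c+2) y G_{a+1} G_b G_{c+1} (1-y²)^{3/2}`,
with the recurrence of `gegShift` applied to the first, respectively the third, factor. -/
lemma satisfiesGegTripleRec_gegTriple (b : ℕ) :
    SatisfiesGegTripleRec (fun a c => gegTriple a b c) := fun a c => by
  simp only [gegTriple]
  rw [← integral_const_mul_add_const_mul (intervalIntegrable_gegTriple _ _ _)
      (intervalIntegrable_gegTriple _ _ _),
    ← integral_const_mul_add_const_mul (intervalIntegrable_gegTriple _ _ _)
      (intervalIntegrable_gegTriple _ _ _),
    ← intervalIntegral.integral_const_mul, ← intervalIntegral.integral_const_mul]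
  refine integral_congr fun y _ => ?_
  linear_combination
    ((c:ℝ) + 2) * gegShift b y * gegShift (c + 1) y * (1 - y ^ 2) ^ ((3:ℝ) / 2) *
        gegShift_rec a y -
      ((a:ℝ) + 2) * gegShift (a + 1) y * gegShift b y * (1 - y ^ 2) ^ ((3:ℝ) / 2) *
        gegShift_rec c y

theorem SatisfiesGegTripleRec.eq {X Y : ℕ → ℕ → ℝ} (hX : SatisfiesGegTripleRec X)
    (hY : SatisfiesGegTripleRec Y) (h₀ : X 0 = Y 0) (h₁ : X 1 = Y 1)
    (hc₀ : ∀ a, X a 0 = Y a 0) : X = Y := by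
  funext a
  induction a using Nat.twoStepInduction with
  | zero => exact h₀
  | one => exact h₁
  | more a ih₀ ih₁ =>
    funext c
    cases c with
    | zero => exact hc₀ _
    | succ c =>
      have hXc := hX a c
      rw [ih₀, ih₁] at hXc
      apply mul_left_cancel₀ (by positivity : ((c:ℝ) + 2) * ((a:ℝ) + 1) ≠ 0)
      linear_combination hXc - hY a c

/-- `|i - j| ≤ m ≤ i + j` with `i + j - m` even, in the shifted indices `a = i + 1`,
`b = j + 1`, `c = m + 1`. -/
def GegAdmissible (a b c : ℕ) : Prop :=
  c < a + b ∧ a < b + c ∧ b < a + c ∧ (a + b + c) % 2 = 1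

instance (a b c : ℕ) : Decidable (GegAdmissible a b c) :=
  inferInstanceAs (Decidable (_ ∧ _ ∧ _ ∧ _))

noncomputable def gegTripleClosed (a b c : ℕ) : ℝ :=
  if GegAdmissible a b c then
    π / 128 * (((a:ℝ) + b - c + 1) * ((a:ℝ) - b + c + 1) * (-(a:ℝ) + b + c + 1) *
      ((a:ℝ) + b + c + 3))
  else 0

lemma gegTripleClosed_of_not {a b c : ℕ} (h : ¬GegAdmissible a b c) :
    gegTripleClosed a b c = 0 :=
  if_neg h

lemma gegTripleClosed_of_le {a b c : ℕ} (hodd : (a + b + c) % 2 = 1) (hc : c ≤ a + b + 1)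
    (ha : a ≤ b + c + 1) (hb : b ≤ a + c + 1) :
    gegTripleClosed a b c = π / 128 * (((a:ℝ) + b - c + 1) * ((a:ℝ) - b + c + 1) *
      (-(a:ℝ) + b + c + 1) * ((a:ℝ) + b + c + 3)) := by
  by_cases h : GegAdmissible a b c
  · exact if_pos h
  · rw [gegTripleClosed_of_not h]
    rcases (by unfold GegAdmissible at h; omega :
        c = a + b + 1 ∨ a = b + c + 1 ∨ b = a + c + 1) with rfl | rfl | rfl <;>
      push_cast <;> ring

lemma gegTripleClosed_comm (a b c : ℕ) : gegTripleClosed a b c = gegTripleClosed b a c := by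
  have h : GegAdmissible a b c ↔ GegAdmissible b a c := by unfold GegAdmissible; omega
  simp only [gegTripleClosed, h]
  split_ifs <;> ring

lemma gegTripleClosed_zero_left (b c : ℕ) : gegTripleClosed 0 b c = 0 :=
  gegTripleClosed_of_not (by unfold GegAdmissible; omega)

lemma gegTripleClosed_zero_right (a b : ℕ) : gegTripleClosed a b 0 = 0 :=
  gegTripleClosed_of_not (by unfold GegAdmissible; omega)

lemma gegTripleClosed_one_one (c : ℕ) :
    gegTripleClosed 1 1 c = if c = 1 then 3 * π / 8 else 0 := by
  split_ifs with hc
  · subst hc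
    rw [gegTripleClosed_of_le (by norm_num) (by norm_num) (by norm_num) (by norm_num)]
    norm_num
    ring
  · exact gegTripleClosed_of_not (by unfold GegAdmissible; omega)

lemma satisfiesGegTripleRec_gegTripleClosed (b : ℕ) :
    SatisfiesGegTripleRec (fun a c => gegTripleClosed a b c) := fun a c => by
  simp only
  by_cases h : (a + b + c) % 2 = 0 ∧ c ≤ a + b ∧ a ≤ b + c ∧ b ≤ a + c + 2
  · rw [gegTripleClosed_of_le (by omega) (by omega) (by omega) (by omega),
      gegTripleClosed_of_le (by omega) (by omega) (by omega) (by omega),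
      gegTripleClosed_of_le (by omega) (by omega) (by omega) (by omega),
      gegTripleClosed_of_le (by omega) (by omega) (by omega) (by omega)]
    push_cast
    ring
  · rw [gegTripleClosed_of_not (a := a + 2) (c := c + 1),
      gegTripleClosed_of_not (a := a) (c := c + 1),
      gegTripleClosed_of_not (a := a + 1) (c := c + 2),
      gegTripleClosed_of_not (a := a + 1) (c := c)]
    · ring
    all_goals unfold GegAdmissible; omega

/-- The recurrence runs in the first and third index. The values at `a = 1` are known for
`b = 1`; this gives all values with `b = 1`, hence by symmetry the values at `a = 1` for every
`b`. -/
theorem gegTriple_eq_gegTripleClosed (a b c : ℕ) :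
    gegTriple a b c = gegTripleClosed a b c := by
  have hone : (fun a c => gegTriple a 1 c) = (fun a c => gegTripleClosed a 1 c) :=
    (satisfiesGegTripleRec_gegTriple 1).eq (satisfiesGegTripleRec_gegTripleClosed 1)
      (funext fun c => by simp only [gegTriple_zero_left, gegTripleClosed_zero_left])
      (funext fun c => by simp only [gegTriple_one_one, gegTripleClosed_one_one])
      (fun a => by simp only [gegTriple_zero_right, gegTripleClosed_zero_right])
  have hb : (fun a c => gegTriple a b c) = (fun a c => gegTripleClosed a b c) :=
    (satisfiesGegTripleRec_gegTriple b).eq (satisfiesGegTripleRec_gegTripleClosed b)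
      (funext fun c => by simp only [gegTriple_zero_left, gegTripleClosed_zero_left])
      (funext fun c => by
        rw [gegTriple_comm, gegTripleClosed_comm]
        exact congrFun (congrFun hone b) c)
      (fun a => by simp only [gegTriple_zero_right, gegTripleClosed_zero_right])
  exact congrFun (congrFun hb a) c

lemma gegAdmissible_succ_iff (i j m : ℕ) :
    GegAdmissible (i + 1) (j + 1) (m + 1) ↔
      |(i:ℤ) - (j:ℤ)| ≤ (m:ℤ) ∧ (m:ℤ) ≤ (i:ℤ) + (j:ℤ) ∧
        Even ((i:ℤ) + (j:ℤ) - (m:ℤ)) := by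
  rw [GegAdmissible, abs_le, Int.even_iff]
  omega

lemma wYM_sq (n : ℕ) : wYM n ^ 2 = 8 / π / (((n:ℝ) + 1) * ((n:ℝ) + 3)) := by
  rw [wYM, div_pow, sq_sqrt (by positivity), sq_sqrt (by positivity)]

lemma wYM_mul_wYM_mul_wYM (i j m : ℕ) :
    wYM i * wYM j * wYM m * (π / 128) =
      1 / (4 * √(2 * π * ((i:ℝ) + 1) * ((i:ℝ) + 3) * ((j:ℝ) + 1) * ((j:ℝ) + 3) *
        ((m:ℝ) + 1) * ((m:ℝ) + 3))) := by
  have hw : ∀ n, 0 ≤ wYM n := fun n => by rw [wYM]; positivity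
  rw [← sq_eq_sq₀ (by have := hw i; have := hw j; have := hw m; positivity) (by positivity),
    mul_pow, mul_pow, mul_pow, wYM_sq, wYM_sq, wYM_sq, div_pow, div_pow, one_pow, mul_pow,
    sq_sqrt (by positivity)]
  field_simp
  ring

/-- Closed formula for the quadratic Yang–Mills Fourier coefficients. -/
theorem cbar_closed_formula (i j m : ℕ) :
    ((|(i:ℤ) - (j:ℤ)| ≤ (m:ℤ) ∧ (m:ℤ) ≤ (i:ℤ) + (j:ℤ) ∧ Even ((i:ℤ) + (j:ℤ) - (m:ℤ))) →
      cbar i j m =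
        ((i:ℝ) + j - m + 2) * ((i:ℝ) - j + m + 2) * (-(i:ℝ) + j + m + 2) *
            ((i:ℝ) + j + m + 6) /
          (4 * Real.sqrt (2 * Real.pi * ((i:ℝ) + 1) * ((i:ℝ) + 3) * ((j:ℝ) + 1) *
            ((j:ℝ) + 3) * ((m:ℝ) + 1) * ((m:ℝ) + 3)))) ∧
    (¬(|(i:ℤ) - (j:ℤ)| ≤ (m:ℤ) ∧ (m:ℤ) ≤ (i:ℤ) + (j:ℤ) ∧ Even ((i:ℤ) + (j:ℤ) - (m:ℤ))) →
      cbar i j m = 0) := by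
  rw [cbar_eq_gegTriple, gegTriple_eq_gegTripleClosed, gegTripleClosed,
    ← gegAdmissible_succ_iff]
  refine ⟨fun h => ?_, fun h => ?_⟩
  · rw [if_pos h, ← mul_assoc, wYM_mul_wYM_mul_wYM]
    push_cast
    ring
  · rw [if_neg h, mul_zero]
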